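/- arXiv:1909.08739 — 2 statements merged into one kernel-verified Lean document; each statement's English description precedes it below -/
import Mathlib

section
/- Suppose V : ℝ → ℝ extends to a function analytic on an open set D ⊆ ℂ containing ℝ which is real-valued on ℝ, let V₀ := sup_{x∈ℝ} |V(x)|, fix μ₀ with 0 < μ₀ < V₀ and limsup_{|x|→∞} |V(x)| < μ₀, assume V is a double-lobe potential near μ₀, and assume V is odd: V(−x) = −V(x) for all x ∈ ℝ. Then there exist positive constants h₀ and ε such that for every h with 0 < h ≤ h₀, no eigenvalue λ of P(h) satisfying |λ − i·μ₀| < ε is purely imaginary; that is, every such eigenvalue has Re λ ≠ 0. -/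
/-!
At a purely imaginary spectral parameter `λ = iμ` the eigenvalue system reads
`h u₁' = μ u₁ - V u₂`, `h u₂' = V u₁ - μ u₂`. When `V` is odd, the pairing
`Q(x) = u₁(x) conj u₁(-x) + u₂(x) conj u₂(-x)` of a solution with its reflection is constant;
as a product of `L²` functions it is integrable on `ℝ`, hence zero, and `Q(0) = |u(0)|²`
forces `u(0) = 0`. The energy `|u₁|² + |u₂|²` has derivative `(2μ/h)(|u₁|² - |u₂|²)`, in which
`V` cancels, so Grönwall's inequality gives `u ≡ 0`.
-/

open Complex MeasureTheory ComplexConjugate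

noncomputable section

/-- `lam` is an eigenvalue of the semiclassical Dirac (Zakharov–Shabat) operator `P(h)`
with potential `V`: there is a differentiable, not identically vanishing, square-integrable
solution `(u₁, u₂)` of the eigenvalue system. -/
def IsDiracEigenvalue (V : ℝ → ℝ) (h : ℝ) (lam : ℂ) : Prop :=
  ∃ u₁ u₂ : ℝ → ℂ,
    Differentiable ℝ u₁ ∧ Differentiable ℝ u₂ ∧
    (∃ x : ℝ, u₁ x ≠ 0 ∨ u₂ x ≠ 0) ∧
    MemLp u₁ 2 volume ∧ MemLp u₂ 2 volume ∧
    (∀ x : ℝ,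
      Complex.I * (h : ℂ) * deriv u₁ x + Complex.I * (V x : ℂ) * u₂ x = lam * u₁ x) ∧
    (∀ x : ℝ,
      Complex.I * (V x : ℂ) * u₁ x - Complex.I * (h : ℂ) * deriv u₂ x = lam * u₂ x)

theorem HasDerivAt.comp_neg {E : Type*} [NormedAddCommGroup E] [NormedSpace ℝ E] {f : ℝ → E}
    {f' : E} {x : ℝ} (hf : HasDerivAt f f' (-x)) : HasDerivAt (fun y => f (-y)) (-f') x := by
  simpa [Function.comp_def] using hf.scomp x (hasDerivAt_neg x)

theorem eq_zero_of_norm_deriv_le_mul_norm_self {E : Type*} [NormedAddCommGroup E]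
    [NormedSpace ℝ E] {f f' : ℝ → E} {K a : ℝ} (hf : ∀ x, HasDerivAt f (f' x) x)
    (ha : f a = 0) (bound : ∀ x, ‖f' x‖ ≤ K * ‖f x‖) (x : ℝ) : f x = 0 := by
  have hcont : Continuous f := continuous_iff_continuousAt.2 fun x => (hf x).continuousAt
  rcases le_total a x with hax | hxa
  · exact eq_zero_of_abs_deriv_le_mul_abs_self_of_eq_zero_right hcont.continuousOn
      (fun y _ => (hf y).hasDerivWithinAt) ha (fun y _ => bound y) x ⟨hax, le_rfl⟩
  · simpa using eq_zero_of_abs_deriv_le_mul_abs_self_of_eq_zero_right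
      (hcont.comp continuous_neg).continuousOn (fun y _ => (hf (-y)).comp_neg.hasDerivWithinAt)
      (by simpa using ha) (fun y _ => by simpa using bound (-y)) (-x) ⟨neg_le_neg hxa, le_rfl⟩

theorem Real.eq_zero_of_integrable_const {E : Type*} [NormedAddCommGroup E] {c : E}
    (hc : Integrable (fun _ : ℝ => c)) : c = 0 :=
  (integrable_const_iff.1 hc).resolve_right fun h => by
    simpa [Real.volume_univ] using h.measure_univ_lt_top

section ImaginarySpectralParameter

variable {V : ℝ → ℝ} {h μ : ℝ} {u₁ u₂ : ℝ → ℂ}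

theorem hasDerivAt_energy (hu₁ : Differentiable ℝ u₁) (hu₂ : Differentiable ℝ u₂) (hh : h ≠ 0)
    (e₁ : ∀ x, (h : ℂ) * deriv u₁ x = μ * u₁ x - V x * u₂ x)
    (e₂ : ∀ x, (h : ℂ) * deriv u₂ x = V x * u₁ x - μ * u₂ x) (x : ℝ) :
    HasDerivAt (fun y => ‖u₁ y‖ ^ 2 + ‖u₂ y‖ ^ 2)
      (2 * μ / h * (‖u₁ x‖ ^ 2 - ‖u₂ x‖ ^ 2)) x := by
  have d₁ : deriv u₁ x = h⁻¹ • (μ • u₁ x - V x • u₂ x) := by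
    rw [eq_inv_smul_iff₀ hh]; simpa only [Complex.real_smul] using e₁ x
  have d₂ : deriv u₂ x = h⁻¹ • (V x • u₁ x - μ • u₂ x) := by
    rw [eq_inv_smul_iff₀ hh]; simpa only [Complex.real_smul] using e₂ x
  refine ((hu₁ x).hasDerivAt.norm_sq.add (hu₂ x).hasDerivAt.norm_sq).congr_deriv ?_
  simp only [d₁, d₂, inner_smul_right, inner_sub_right, real_inner_self_eq_norm_sq,
    real_inner_comm (u₁ x)]
  ring

theorem energy_eq_zero (hu₁ : Differentiable ℝ u₁) (hu₂ : Differentiable ℝ u₂) (hh : h ≠ 0)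
    (e₁ : ∀ x, (h : ℂ) * deriv u₁ x = μ * u₁ x - V x * u₂ x)
    (e₂ : ∀ x, (h : ℂ) * deriv u₂ x = V x * u₁ x - μ * u₂ x) {a : ℝ}
    (ha : ‖u₁ a‖ ^ 2 + ‖u₂ a‖ ^ 2 = 0) (x : ℝ) : ‖u₁ x‖ ^ 2 + ‖u₂ x‖ ^ 2 = 0 := by
  refine eq_zero_of_norm_deriv_le_mul_norm_self (K := |2 * μ / h|)
    (hasDerivAt_energy hu₁ hu₂ hh e₁ e₂) ha (fun y => ?_) x
  rw [Real.norm_eq_abs, Real.norm_eq_abs, abs_mul]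
  refine mul_le_mul_of_nonneg_left ?_ (abs_nonneg _)
  rw [abs_of_nonneg (a := ‖u₁ y‖ ^ 2 + ‖u₂ y‖ ^ 2) (by positivity), abs_le]
  constructor <;> linarith [sq_nonneg ‖u₁ y‖, sq_nonneg ‖u₂ y‖]

def reflectedPairing (u₁ u₂ : ℝ → ℂ) (x : ℝ) : ℂ :=
  u₁ x * conj (u₁ (-x)) + u₂ x * conj (u₂ (-x))

theorem reflectedPairing_zero (u₁ u₂ : ℝ → ℂ) :
    reflectedPairing u₁ u₂ 0 = ((‖u₁ 0‖ ^ 2 + ‖u₂ 0‖ ^ 2 : ℝ) : ℂ) := by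
  simp [reflectedPairing, Complex.mul_conj']

theorem integrable_reflectedPairing (hu₁ : MemLp u₁ 2) (hu₂ : MemLp u₂ 2) :
    Integrable (reflectedPairing u₁ u₂) := by
  have hneg := Measure.measurePreserving_neg (volume : Measure ℝ)
  exact (hu₁.integrable_mul (hu₁.comp_measurePreserving hneg).star).add
    (hu₂.integrable_mul (hu₂.comp_measurePreserving hneg).star)

theorem hasDerivAt_reflectedPairing (hV : ∀ x, V (-x) = -V x) (hu₁ : Differentiable ℝ u₁)
    (hu₂ : Differentiable ℝ u₂) (hh : h ≠ 0)
    (e₁ : ∀ x, (h : ℂ) * deriv u₁ x = μ * u₁ x - V x * u₂ x)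
    (e₂ : ∀ x, (h : ℂ) * deriv u₂ x = V x * u₁ x - μ * u₂ x) (x : ℝ) :
    HasDerivAt (reflectedPairing u₁ u₂) 0 x := by
  have c₁ := congrArg conj (e₁ (-x))
  have c₂ := congrArg conj (e₂ (-x))
  simp only [map_mul, map_sub, map_neg, Complex.conj_ofReal, hV, Complex.ofReal_neg] at c₁ c₂
  have H := ((hu₁ x).hasDerivAt.mul (hu₁ (-x)).hasDerivAt.comp_neg.star).add
    ((hu₂ x).hasDerivAt.mul (hu₂ (-x)).hasDerivAt.comp_neg.star)
  refine H.congr_deriv (mul_left_cancel₀ (Complex.ofReal_ne_zero.2 hh) ?_)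
  simp only [star_neg, Complex.star_def]
  linear_combination conj (u₁ (-x)) * e₁ x - u₁ x * c₁ + conj (u₂ (-x)) * e₂ x - u₂ x * c₂

theorem energy_eq_zero_of_odd (hV : ∀ x, V (-x) = -V x) (hu₁ : Differentiable ℝ u₁)
    (hu₂ : Differentiable ℝ u₂) (hL₁ : MemLp u₁ 2) (hL₂ : MemLp u₂ 2) (hh : h ≠ 0)
    (e₁ : ∀ x, (h : ℂ) * deriv u₁ x = μ * u₁ x - V x * u₂ x)
    (e₂ : ∀ x, (h : ℂ) * deriv u₂ x = V x * u₁ x - μ * u₂ x) (x : ℝ) :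
    ‖u₁ x‖ ^ 2 + ‖u₂ x‖ ^ 2 = 0 := by
  have hderiv := hasDerivAt_reflectedPairing hV hu₁ hu₂ hh e₁ e₂
  have hconst : reflectedPairing u₁ u₂ = fun _ => reflectedPairing u₁ u₂ 0 :=
    funext fun y => is_const_of_deriv_eq_zero (fun y => (hderiv y).differentiableAt)
      (fun y => (hderiv y).deriv) y 0
  have hzero : reflectedPairing u₁ u₂ 0 = 0 :=
    Real.eq_zero_of_integrable_const (hconst ▸ integrable_reflectedPairing hL₁ hL₂)
  refine energy_eq_zero hu₁ hu₂ hh e₁ e₂ (a := 0) ?_ x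
  exact_mod_cast (reflectedPairing_zero u₁ u₂).symm.trans hzero

theorem not_isDiracEigenvalue_of_odd_of_re_eq_zero (hV : ∀ x, V (-x) = -V x) (hh : h ≠ 0)
    {lam : ℂ} (hre : lam.re = 0) : ¬ IsDiracEigenvalue V h lam := by
  rintro ⟨u₁, u₂, hu₁, hu₂, ⟨x, hx⟩, hL₁, hL₂, eq₁, eq₂⟩
  have hlam : lam = I * lam.im := Complex.ext (by simp [hre]) (by simp)
  have e₁ (y : ℝ) : (h : ℂ) * deriv u₁ y = lam.im * u₁ y - V y * u₂ y :=
    mul_left_cancel₀ I_ne_zero (by linear_combination eq₁ y + u₁ y * hlam)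
  have e₂ (y : ℝ) : (h : ℂ) * deriv u₂ y = V y * u₁ y - lam.im * u₂ y :=
    mul_left_cancel₀ I_ne_zero (by linear_combination -eq₂ y - u₂ y * hlam)
  have hpos : 0 < ‖u₁ x‖ ^ 2 + ‖u₂ x‖ ^ 2 := by
    rcases hx with hx | hx
    · exact add_pos_of_pos_of_nonneg (pow_pos (norm_pos_iff.2 hx) 2) (sq_nonneg _)
    · exact add_pos_of_nonneg_of_pos (sq_nonneg _) (pow_pos (norm_pos_iff.2 hx) 2)
  exact hpos.ne' (energy_eq_zero_of_odd hV hu₁ hu₂ hL₁ hL₂ hh e₁ e₂ x)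

end ImaginarySpectralParameter

theorem double_lobe_odd_no_purely_imaginary_eigenvalues_general
    (V : ℝ → ℝ) (μ₀ : ℝ) (hodd : ∀ x : ℝ, V (-x) = -V x) :
    ∃ h₀ ε : ℝ, 0 < h₀ ∧ 0 < ε ∧
      ∀ h : ℝ, 0 < h → h ≤ h₀ →
        ∀ lam : ℂ, IsDiracEigenvalue V h lam →
          ‖lam - Complex.I * (μ₀ : ℂ)‖ < ε → lam.re ≠ 0 :=
  ⟨1, 1, one_pos, one_pos, fun _ hh _ _ hev _ hre =>
    not_isDiracEigenvalue_of_odd_of_re_eq_zero hodd hh.ne' hre hev⟩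

/-- For an odd double-lobe potential near `μ₀`, no eigenvalue of
`P(h)` in a small disk around `i·μ₀` is purely imaginary, provided `h` is small enough. -/
theorem double_lobe_odd_no_purely_imaginary_eigenvalues
    (V : ℝ → ℝ) (D : Set ℂ) (Vc : ℂ → ℂ)
    (hD : IsOpen D) (hRD : ∀ x : ℝ, (x : ℂ) ∈ D)
    (hVc : DifferentiableOn ℂ Vc D) (hext : ∀ x : ℝ, Vc x = (V x : ℂ))
    (μ₀ : ℝ) (hμ₀ : 0 < μ₀) (hμ₀V : μ₀ < ⨆ x : ℝ, |V x|)
    (hlim : ∃ R m : ℝ, m < μ₀ ∧ ∀ x : ℝ, R ≤ |x| → |V x| ≤ m)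
    (αl βl βr αr : ℝ) (hord : αl < βl ∧ βl < βr ∧ βr < αr)
    (hset : {x : ℝ | (V x) ^ 2 = μ₀ ^ 2} = {αl, βl, βr, αr})
    (hdαl : deriv V αl ≠ 0) (hdβl : deriv V βl ≠ 0)
    (hdβr : deriv V βr ≠ 0) (hdαr : deriv V αr ≠ 0)
    (hodd : ∀ x : ℝ, V (-x) = -V x) :
    ∃ h₀ ε : ℝ, 0 < h₀ ∧ 0 < ε ∧
      ∀ h : ℝ, 0 < h → h ≤ h₀ →
        ∀ lam : ℂ, IsDiracEigenvalue V h lam →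
          ‖lam - Complex.I * (μ₀ : ℂ)‖ < ε → lam.re ≠ 0 :=
  double_lobe_odd_no_purely_imaginary_eigenvalues_general V μ₀ hodd
end
end

section
/- Let V : ℝ → ℝ be continuously differentiable, let μ₀ > 0, let δ > 0, and suppose α, β : (μ₀ − δ, μ₀ + δ) → ℝ are differentiable functions with α(μ) < β(μ), V(α(μ))² = μ², V(β(μ))² = μ², V'(α(μ)) ≠ 0, V'(β(μ)) ≠ 0, and V(t)² − μ² > 0 for all t ∈ (α(μ), β(μ)), for every μ ∈ (μ₀ − δ, μ₀ + δ). Then the improper integral ∫_{α(μ₀)}^{β(μ₀)} (V(t)² − μ₀²)^{−1/2} dt converges, and the function F(μ) := ∫_{α(μ)}^{β(μ)} √(V(t)² − μ²) dt is differentiable at μ₀ with F'(μ₀) = −μ₀ · ∫_{α(μ₀)}^{β(μ₀)} (V(t)² − μ₀²)^{−1/2} dt; in particular F'(μ₀) < 0. -/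
/-!
Split `F(μ)` into the integral of `√(V² - μ²)` over the fixed interval `[α(μ₀), β(μ₀)]` and two
boundary pieces. On the fixed interval one differentiates under the integral sign: near `μ₀` the
difference quotients of `√(V(t)² - μ²)` are dominated by a multiple of `(V(t)² - μ₀²)^{-1/2}`, which
is integrable because `V² - μ₀²` has simple zeros at the endpoints and hence grows at least
linearly away from them. Each boundary piece integrates over an interval of length `O(|μ - μ₀|)`
(the turning points move differentiably) an integrand of size `O(|μ - μ₀|^{1/2})` (`V²` is locally
Lipschitz and equals `μ²` at the moving endpoint), so it is `o(μ - μ₀)`.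
-/

open Set MeasureTheory Filter Topology Asymptotics

lemma Real.abs_sqrt_sub_sqrt_le {a b : ℝ} (hb : 0 < b) : |√a - √b| ≤ |a - b| / √b := by
  have hsb : 0 < √b := Real.sqrt_pos.2 hb
  rw [le_div_iff₀ hsb]
  rcases le_or_gt a 0 with ha | ha
  · rw [Real.sqrt_eq_zero'.2 ha, zero_sub, abs_neg, abs_of_pos hsb, Real.mul_self_sqrt hb.le,
      abs_of_neg (by linarith)]
    linarith
  · have hsum : 0 < √a + √b := by positivity
    calc |√a - √b| * √b ≤ |√a - √b| * (√a + √b) := by gcongr; linarith [Real.sqrt_nonneg a]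
      _ = |a - b| := by
        rw [← abs_of_pos hsum, ← abs_mul]
        congr 1
        nlinarith [Real.sq_sqrt ha.le, Real.sq_sqrt hb.le]

lemma intervalIntegrable_inv_sqrt_abs_sub (a x y : ℝ) :
    IntervalIntegrable (fun t => (√|t - a|)⁻¹) volume x y := by
  have hnonneg : ∀ c, 0 ≤ c → IntervalIntegrable (fun t => (√|t|)⁻¹) volume 0 c := fun c hc =>
    (intervalIntegral.intervalIntegrable_rpow' (r := -(1 / 2)) (by norm_num)).congr fun t ht => by
      rw [uIoc_of_le hc] at ht
      simp [abs_of_pos ht.1, Real.sqrt_eq_rpow, Real.rpow_neg ht.1.le]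
  have hzero : ∀ c, IntervalIntegrable (fun t => (√|t|)⁻¹) volume 0 c := fun c => by
    rcases le_total 0 c with hc | hc
    · exact hnonneg c hc
    · exact (IntervalIntegrable.iff_comp_neg).2 (by simpa using hnonneg (-c) (by linarith))
  simpa using ((hzero (x - a)).symm.trans (hzero (y - a))).comp_sub_right a

lemma HasDerivAt.eventually_mul_abs_sub_le {q : ℝ → ℝ} {q' a : ℝ} (hq : HasDerivAt q q' a) :
    ∀ᶠ t in 𝓝 a, |q'| / 2 * |t - a| ≤ |q t - q a| := by
  rcases eq_or_ne q' 0 with rfl | hq'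
  · simp
  filter_upwards [hq.isLittleO.def (by positivity : 0 < |q'| / 2)] with t ht
  rw [Real.norm_eq_abs, Real.norm_eq_abs, smul_eq_mul] at ht
  have := abs_sub_abs_le_abs_sub ((t - a) * q') (q t - q a)
  rw [abs_mul, abs_sub_comm ((t - a) * q')] at this
  linarith

lemma eventually_intervalIntegrable_inv_sqrt_of_simple_zero {q : ℝ → ℝ} {q' a : ℝ}
    (hq : Continuous q) (hqa : q a = 0) (hd : HasDerivAt q q' a) (hq' : q' ≠ 0) :
    ∀ᶠ x in 𝓝 a, IntervalIntegrable (fun t => (√(q t))⁻¹) volume a x := by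
  set d := |q'| / 2
  have hd0 : 0 < d := by positivity
  obtain ⟨ε, hε, hball⟩ := Metric.eventually_nhds_iff_ball.1 hd.eventually_mul_abs_sub_le
  filter_upwards [Metric.ball_mem_nhds a hε] with x hx
  refine ((intervalIntegrable_inv_sqrt_abs_sub a a x).const_mul (√d)⁻¹).mono_fun'
    (Real.continuous_sqrt.comp hq).measurable.inv.aestronglyMeasurable
    (ae_restrict_of_forall_mem measurableSet_uIoc fun t ht => ?_)
  have hlow : d * |t - a| ≤ |q t| := by
    simpa [hqa] using hball t <|
      (convex_ball a ε).ordConnected.uIcc_subset (Metric.mem_ball_self hε) hx (uIoc_subset_uIcc ht)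
  dsimp only
  rw [norm_inv, Real.norm_of_nonneg (Real.sqrt_nonneg _)]
  -- Where `q t ≤ 0` the integrand is `(√(q t))⁻¹ = 0`, so the bound also holds on that side of `a`.
  rcases le_or_gt (q t) 0 with hqt | hqt
  · rw [Real.sqrt_eq_zero'.2 hqt, inv_zero]
    positivity
  have hta : t ≠ a := by rintro rfl; linarith
  calc (√(q t))⁻¹ ≤ (√(d * |t - a|))⁻¹ :=
        inv_anti₀ (Real.sqrt_pos.2 (by positivity [sub_ne_zero.2 hta]))
          (Real.sqrt_le_sqrt (by rwa [abs_of_pos hqt] at hlow))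
    _ = (√d)⁻¹ * (√|t - a|)⁻¹ := by rw [Real.sqrt_mul hd0.le, mul_inv]

lemma intervalIntegrable_inv_sqrt_of_simple_zeros {q : ℝ → ℝ} {a b qa qb : ℝ}
    (hq : Continuous q) (hab : a < b) (hpos : ∀ t ∈ Ioo a b, 0 < q t)
    (hqa : q a = 0) (hqb : q b = 0) (hda : HasDerivAt q qa a) (hdb : HasDerivAt q qb b)
    (hqa' : qa ≠ 0) (hqb' : qb ≠ 0) :
    IntervalIntegrable (fun t => (√(q t))⁻¹) volume a b := by
  obtain ⟨x, hax, hx⟩ :=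
    ((eventually_intervalIntegrable_inv_sqrt_of_simple_zero hq hqa hda hqa').filter_mono
      nhdsWithin_le_nhds |>.and (Ioo_mem_nhdsGT hab)).exists
  obtain ⟨y, hby, hy⟩ :=
    ((eventually_intervalIntegrable_inv_sqrt_of_simple_zero hq hqb hdb hqb').filter_mono
      nhdsWithin_le_nhds |>.and (Ioo_mem_nhdsLT hab)).exists
  have hxy : IntervalIntegrable (fun t => (√(q t))⁻¹) volume x y :=
    ((Real.continuous_sqrt.comp hq).continuousOn.inv₀ fun t ht => (Real.sqrt_pos.2 (hpos t <|
      ordConnected_Ioo.uIcc_subset hx hy ht)).ne').intervalIntegrable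
  exact hax.trans (hxy.trans hby.symm)

lemma intervalIntegrable_inv_sqrt_sq_sub_sq {V : ℝ → ℝ} (hV : Differentiable ℝ V) {a b μ₀ : ℝ}
    (hμ₀ : μ₀ ≠ 0) (hab : a < b) (hpos : ∀ t ∈ Ioo a b, 0 < V t ^ 2 - μ₀ ^ 2)
    (ha : V a ^ 2 = μ₀ ^ 2) (hb : V b ^ 2 = μ₀ ^ 2) (hda : deriv V a ≠ 0) (hdb : deriv V b ≠ 0) :
    IntervalIntegrable (fun t => (√(V t ^ 2 - μ₀ ^ 2))⁻¹) volume a b := by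
  have hdq : ∀ t, HasDerivAt (fun t => V t ^ 2 - μ₀ ^ 2) (2 * V t * deriv V t) t := fun t => by
    simpa using ((hV t).hasDerivAt.pow 2).sub_const (μ₀ ^ 2)
  have hsimple : ∀ t, V t ^ 2 = μ₀ ^ 2 → deriv V t ≠ 0 → 2 * V t * deriv V t ≠ 0 :=
    fun t ht hd => mul_ne_zero (mul_ne_zero two_ne_zero fun h0 => by
      rw [h0, zero_pow two_ne_zero] at ht
      exact pow_ne_zero 2 hμ₀ ht.symm) hd
  exact intervalIntegrable_inv_sqrt_of_simple_zeros ((hV.continuous.pow 2).sub continuous_const)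
    hab hpos (sub_eq_zero.2 ha) (sub_eq_zero.2 hb) (hdq a) (hdq b) (hsimple a ha hda)
    (hsimple b hb hdb)

theorem hasDerivAt_integral_of_dominated_loc_of_lip' {α : Type*} [MeasurableSpace α]
    {μ : Measure α} {F : ℝ → α → ℝ} {F' : α → ℝ} {x₀ : ℝ} {bound : α → ℝ} {s : Set ℝ}
    (hs : s ∈ 𝓝 x₀) (hF_meas : ∀ x ∈ s, AEStronglyMeasurable (F x) μ)
    (hF_int : Integrable (F x₀) μ) (hF'_meas : AEStronglyMeasurable F' μ)
    (h_lipsch : ∀ᵐ a ∂μ, ∀ x ∈ s, ‖F x a - F x₀ a‖ ≤ bound a * ‖x - x₀‖)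
    (bound_integrable : Integrable bound μ)
    (h_diff : ∀ᵐ a ∂μ, HasDerivAt (F · a) (F' a) x₀) :
    HasDerivAt (fun x ↦ ∫ a, F x a ∂μ) (∫ a, F' a ∂μ) x₀ := by
  set L : ℝ →L[ℝ] ℝ →L[ℝ] ℝ := ContinuousLinearMap.smulRightL ℝ ℝ ℝ 1
  have hm : AEStronglyMeasurable (L ∘ F') μ := L.continuous.comp_aestronglyMeasurable hF'_meas
  obtain ⟨hF'_int, key⟩ := hasFDerivAt_integral_of_dominated_loc_of_lip' hs hF_meas hF_int hm
    h_lipsch bound_integrable (h_diff.mono fun _ h ↦ h.hasFDerivAt)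
  have hF'_int' : Integrable F' μ := by simpa [L] using hF'_int.apply_continuousLinearMap 1
  rw [Function.comp_def, ContinuousLinearMap.integral_comp_comm L hF'_int'] at key
  exact hasDerivAt_iff_hasFDerivAt.2 key

lemma abs_sq_sub_sq_le {μ μ₀ : ℝ} (h : |μ - μ₀| < 1) :
    |μ ^ 2 - μ₀ ^ 2| ≤ (2 * |μ₀| + 1) * |μ - μ₀| := by
  rw [show μ ^ 2 - μ₀ ^ 2 = (μ - μ₀ + 2 * μ₀) * (μ - μ₀) by ring, abs_mul]
  gcongr
  calc |μ - μ₀ + 2 * μ₀| ≤ |μ - μ₀| + |2 * μ₀| := abs_add_le _ _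
    _ ≤ 2 * |μ₀| + 1 := by rw [abs_mul, abs_two]; linarith

lemma hasDerivAt_integral_sqrt_sub_sq {g : ℝ → ℝ} (hg : Continuous g) {a b μ₀ : ℝ} (hab : a ≤ b)
    (hpos : ∀ t ∈ Ioo a b, 0 < g t - μ₀ ^ 2)
    (hint : IntervalIntegrable (fun t => (√(g t - μ₀ ^ 2))⁻¹) volume a b) :
    HasDerivAt (fun μ => ∫ t in a..b, √(g t - μ ^ 2))
      (-μ₀ * ∫ t in a..b, (√(g t - μ₀ ^ 2))⁻¹) μ₀ := by
  have hint' := (intervalIntegrable_iff_integrableOn_Ioc_of_le hab).1 hint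
  have hcont : ∀ μ : ℝ, Continuous fun t => √(g t - μ ^ 2) := fun μ =>
    Real.continuous_sqrt.comp (hg.sub continuous_const)
  have hae : ∀ᵐ t ∂(volume.restrict (Ioc a b)), 0 < g t - μ₀ ^ 2 := by
    rw [← Measure.restrict_congr_set Ioo_ae_eq_Ioc]
    exact ae_restrict_of_forall_mem measurableSet_Ioo hpos
  simp only [intervalIntegral.integral_of_le hab, ← integral_const_mul]
  refine hasDerivAt_integral_of_dominated_loc_of_lip' (Metric.ball_mem_nhds μ₀ one_pos)
    (fun μ _ => (hcont μ).aestronglyMeasurable) ((hcont μ₀).integrableOn_Ioc)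
    (hint'.const_mul _).aestronglyMeasurable ?_ (hint'.const_mul (2 * |μ₀| + 1)) ?_
  · filter_upwards [hae] with t ht μ hμ
    rw [Metric.mem_ball, Real.dist_eq] at hμ
    calc ‖√(g t - μ ^ 2) - √(g t - μ₀ ^ 2)‖ ≤ |μ ^ 2 - μ₀ ^ 2| / √(g t - μ₀ ^ 2) := by
          rw [Real.norm_eq_abs, ← abs_neg (μ ^ 2 - μ₀ ^ 2), show -(μ ^ 2 - μ₀ ^ 2) =
            g t - μ ^ 2 - (g t - μ₀ ^ 2) by ring]
          exact Real.abs_sqrt_sub_sqrt_le ht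
      _ ≤ (2 * |μ₀| + 1) * |μ - μ₀| / √(g t - μ₀ ^ 2) := by gcongr; exact abs_sq_sub_sq_le hμ
      _ = (2 * |μ₀| + 1) * (√(g t - μ₀ ^ 2))⁻¹ * ‖μ - μ₀‖ := by rw [Real.norm_eq_abs]; ring
  · filter_upwards [hae] with t ht
    convert ((hasDerivAt_pow 2 μ₀).const_sub (g t)).sqrt ht.ne' using 1
    field_simp
    ring

lemma norm_integral_sqrt_sub_le {g : ℝ → ℝ} {K : NNReal} {s : Set ℝ} (hg : LipschitzOnWith K g s)
    {x y : ℝ} (hxy : uIcc x y ⊆ s) :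
    ‖∫ t in x..y, √(g t - g x)‖ ≤ √(K * |y - x|) * |y - x| := by
  refine intervalIntegral.norm_integral_le_of_norm_le_const fun t ht => ?_
  have ht' := uIoc_subset_uIcc ht
  rw [Real.norm_of_nonneg (Real.sqrt_nonneg _)]
  refine Real.sqrt_le_sqrt ?_
  calc g t - g x ≤ dist (g t) (g x) := le_abs_self _
    _ ≤ K * dist t x := hg.dist_le_mul t (hxy ht') x (hxy left_mem_uIcc)
    _ ≤ K * |y - x| := mul_le_mul_of_nonneg_left (abs_sub_left_of_mem_uIcc ht') K.coe_nonneg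

lemma hasDerivAt_integral_sqrt_sub_of_endpoint {g c a : ℝ → ℝ} {μ₀ : ℝ}
    (hg : ContDiffAt ℝ 1 g (a μ₀)) (ha : DifferentiableAt ℝ a μ₀)
    (hga : ∀ᶠ μ in 𝓝 μ₀, g (a μ) = c μ) :
    HasDerivAt (fun μ => ∫ t in a μ..a μ₀, √(g t - c μ)) 0 μ₀ := by
  obtain ⟨K, s, hs, hK⟩ := hg.exists_lipschitzOnWith
  obtain ⟨ε, hε, hball⟩ := Metric.mem_nhds_iff.1 hs
  have hbound : ∀ᶠ μ in 𝓝 μ₀, ‖∫ t in a μ..a μ₀, √(g t - c μ)‖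
      ≤ √(K * |a μ₀ - a μ|) * |a μ₀ - a μ| := by
    filter_upwards [hga, ha.continuousAt.preimage_mem_nhds (Metric.ball_mem_nhds _ hε)]
      with μ hμ hμs
    rw [← hμ]
    exact norm_integral_sqrt_sub_le (hK.mono hball)
      ((convex_ball _ _).ordConnected.uIcc_subset hμs (Metric.mem_ball_self hε))
  have hsqrt : Tendsto (fun μ => √(K * |a μ₀ - a μ|)) (𝓝 μ₀) (𝓝 0) := by
    have h := ((ha.continuousAt.const_sub (a μ₀)).abs.const_mul (K : ℝ)).sqrt
    simpa using h
  have hdist : (fun μ => |a μ₀ - a μ|) =O[𝓝 μ₀] (fun μ => μ - μ₀) := by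
    simpa [abs_sub_comm] using ha.hasDerivAt.isBigO_sub.norm_left
  have hsmall := (isLittleO_one_iff ℝ |>.2 hsqrt).mul_isBigO hdist
  simp only [one_mul] at hsmall
  rw [hasDerivAt_iff_isLittleO]
  simpa using (IsBigO.of_bound' (hbound.mono fun μ h =>
    h.trans_eq (Real.norm_of_nonneg (by positivity)).symm)).trans_isLittleO hsmall

/-- Differentiation formula for the action integral between two
consecutive simple turning points: `F(μ) = ∫_{α(μ)}^{β(μ)} √(V(t)² − μ²) dt` is
differentiable at `μ₀` with `F'(μ₀) = −μ₀·∫_{α(μ₀)}^{β(μ₀)} (V(t)² − μ₀²)^{-1/2} dt < 0`,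
the singular integral being convergent. -/
theorem action_integral_hasDerivAt
    (V : ℝ → ℝ) (hV : ContDiff ℝ 1 V) (μ₀ δ : ℝ) (hμ₀ : 0 < μ₀) (hδ : 0 < δ)
    (α β : ℝ → ℝ)
    (hα : ∀ μ ∈ Ioo (μ₀ - δ) (μ₀ + δ), DifferentiableAt ℝ α μ)
    (hβ : ∀ μ ∈ Ioo (μ₀ - δ) (μ₀ + δ), DifferentiableAt ℝ β μ)
    (hαβ : ∀ μ ∈ Ioo (μ₀ - δ) (μ₀ + δ), α μ < β μ)
    (hVα : ∀ μ ∈ Ioo (μ₀ - δ) (μ₀ + δ), (V (α μ)) ^ 2 = μ ^ 2)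
    (hVβ : ∀ μ ∈ Ioo (μ₀ - δ) (μ₀ + δ), (V (β μ)) ^ 2 = μ ^ 2)
    (hdα : ∀ μ ∈ Ioo (μ₀ - δ) (μ₀ + δ), deriv V (α μ) ≠ 0)
    (hdβ : ∀ μ ∈ Ioo (μ₀ - δ) (μ₀ + δ), deriv V (β μ) ≠ 0)
    (hpos : ∀ μ ∈ Ioo (μ₀ - δ) (μ₀ + δ), ∀ t ∈ Ioo (α μ) (β μ),
      0 < (V t) ^ 2 - μ ^ 2) :
    MeasureTheory.IntegrableOn (fun t => (Real.sqrt ((V t) ^ 2 - μ₀ ^ 2))⁻¹)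
      (Ioo (α μ₀) (β μ₀)) ∧
    HasDerivAt (fun μ => ∫ t in (α μ)..(β μ), Real.sqrt ((V t) ^ 2 - μ ^ 2))
      (-μ₀ * ∫ t in (α μ₀)..(β μ₀), (Real.sqrt ((V t) ^ 2 - μ₀ ^ 2))⁻¹) μ₀ ∧
    -μ₀ * (∫ t in (α μ₀)..(β μ₀), (Real.sqrt ((V t) ^ 2 - μ₀ ^ 2))⁻¹) < 0 := by
  have hmem : μ₀ ∈ Ioo (μ₀ - δ) (μ₀ + δ) := ⟨by linarith, by linarith⟩
  have hab := hαβ μ₀ hmem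
  have hcont : Continuous fun t => V t ^ 2 := hV.continuous.pow 2
  have hint := intervalIntegrable_inv_sqrt_sq_sub_sq (hV.differentiable one_ne_zero) hμ₀.ne' hab
    (hpos μ₀ hmem) (hVα μ₀ hmem) (hVβ μ₀ hmem) (hdα μ₀ hmem) (hdβ μ₀ hmem)
  have hI : 0 < ∫ t in α μ₀..β μ₀, (√(V t ^ 2 - μ₀ ^ 2))⁻¹ :=
    intervalIntegral.intervalIntegral_pos_of_pos_on hint
      (fun t ht => inv_pos.2 (Real.sqrt_pos.2 (hpos μ₀ hmem t ht))) hab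
  refine ⟨(intervalIntegrable_iff_integrableOn_Ioo_of_le hab.le).1 hint, ?_, by nlinarith⟩
  have hturn : ∀ᶠ μ in 𝓝 μ₀, μ ∈ Ioo (μ₀ - δ) (μ₀ + δ) := isOpen_Ioo.mem_nhds hmem
  have hG := hasDerivAt_integral_sqrt_sub_sq hcont hab.le (hpos μ₀ hmem) hint
  have hRα := hasDerivAt_integral_sqrt_sub_of_endpoint (c := fun μ => μ ^ 2)
    (hV.pow 2).contDiffAt (hα μ₀ hmem) (hturn.mono hVα)
  have hRβ := hasDerivAt_integral_sqrt_sub_of_endpoint (c := fun μ => μ ^ 2)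
    (hV.pow 2).contDiffAt (hβ μ₀ hmem) (hturn.mono hVβ)
  have hsplit : (fun μ => ∫ t in α μ..β μ, √(V t ^ 2 - μ ^ 2)) = fun μ =>
      (∫ t in α μ₀..β μ₀, √(V t ^ 2 - μ ^ 2)) +
        ((∫ t in α μ..α μ₀, √(V t ^ 2 - μ ^ 2)) - ∫ t in β μ..β μ₀, √(V t ^ 2 - μ ^ 2)) := by
    funext μ
    have hii : ∀ x y, IntervalIntegrable (fun t => √(V t ^ 2 - μ ^ 2)) volume x y := fun x y =>
      (Real.continuous_sqrt.comp (hcont.sub continuous_const)).intervalIntegrable x y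
    rw [← intervalIntegral.integral_interval_sub_interval_comm (hii _ _) (hii _ _) (hii _ _)]
    ring
  rw [hsplit]
  exact (hG.add (hRα.sub hRβ)).congr_deriv (by ring)
end
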